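/- Let (A, m, Δ, η, ε) be a topologically free K[[ℏ]]-bialgebra such that A/ℏA is, for each a ∈ A/ℏA, conilpotent (i.e. (id − η∘ε)^{⊗n} ∘ Δ^{(n)}(a) = 0 for large n). Then for every a ∈ A, the ℏ-adic valuation of (id − η∘ε)^{⊗n} ∘ Δ^{(n)}(a) tends to infinity as n → ∞. -/

import Mathlib

open TensorProduct

noncomputable section

universe u

variable (K : Type u) [Field K] [CharZero K]
variable (A : Type u) [Ring A] [Bialgebra (PowerSeries K) A]

/-- The iterated tensor powers `A^{⊗n}` (with `A^{⊗0} = K[[ℏ]]`). -/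
def Tpow : ℕ → ModuleCat (PowerSeries K)
  | 0 => ModuleCat.of (PowerSeries K) (PowerSeries K)
  | n + 1 => ModuleCat.of (PowerSeries K) (A ⊗[PowerSeries K] (Tpow n))

/-- The iterated reduced coproduct `(id − η∘ε)^{⊗n} ∘ Δ^{(n)} : A → A^{⊗n}`. -/
def Ered : ∀ n : ℕ, A →ₗ[PowerSeries K] Tpow K A n
  | 0 => (Coalgebra.counit : A →ₗ[PowerSeries K] PowerSeries K)
  | n + 1 =>
      (TensorProduct.map
        (LinearMap.id - Algebra.linearMap (PowerSeries K) A ∘ₗ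
          (Coalgebra.counit : A →ₗ[PowerSeries K] PowerSeries K))
        (Ered n)) ∘ₗ (Coalgebra.comul : A →ₗ[PowerSeries K] A ⊗[PowerSeries K] A)

/-! Write `Δ̄ⁿ := (id − η∘ε)^{⊗n} ∘ Δ^{(n)}`. Since `Δ̄^{p+1}` kills `1`, it absorbs
`id − η∘ε`, so `Δ̄^{p+n+1}` is `Δ̄^{n+1}` followed by `Δ̄^{p+1}` on the last tensor factor.
Hence if `Δ̄^{N+1} a = ℏᵏ z`, then `Δ̄^{p+N+1} a = ℏᵏ (id^{⊗N} ⊗ Δ̄^{p+1}) z`, and applying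
conilpotency modulo `ℏ` to the last factor of each of the finitely many pure tensors making up `z`
shows that this is divisible by `ℏ^{k+1}` for all large `p`. -/

open Filter

theorem LinearMap.eventually_exists_lTensor_eq_smul {R M P : Type*} {N : ℕ → Type*}
    [CommSemiring R] [AddCommMonoid M] [Module R M] [AddCommMonoid P] [Module R P]
    [∀ p, AddCommMonoid (N p)] [∀ p, Module R (N p)] (r : R) (f : ∀ p, M →ₗ[R] N p)
    (hf : ∀ w, ∀ᶠ p in atTop, ∃ v, f p w = r • v) (x : P ⊗[R] M) :
    ∀ᶠ p in atTop, ∃ v, (f p).lTensor P x = r • v := by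
  induction x using TensorProduct.induction_on with
  | zero => exact .of_forall fun _ => ⟨0, by simp⟩
  | tmul a w =>
    filter_upwards [hf w] with p ⟨v, hv⟩
    exact ⟨a ⊗ₜ v, by rw [LinearMap.lTensor_tmul, hv, tmul_smul]⟩
  | add x y hx hy =>
    filter_upwards [hx, hy] with p ⟨v, hv⟩ ⟨w, hw⟩
    exact ⟨v + w, by rw [map_add, hv, hw, smul_add]⟩

namespace Ered

omit [CharZero K]

abbrev augProj : A →ₗ[PowerSeries K] A :=
  LinearMap.id - Algebra.linearMap (PowerSeries K) A ∘ₗ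
    (Coalgebra.counit : A →ₗ[PowerSeries K] PowerSeries K)

theorem succ_one (n : ℕ) : Ered K A (n + 1) 1 = 0 := by
  change TensorProduct.map (augProj K A) (Ered K A n) (Coalgebra.comul 1) =
    (0 : A ⊗[PowerSeries K] Tpow K A n)
  rw [Bialgebra.comul_one, Algebra.TensorProduct.one_def, TensorProduct.map_tmul,
    show augProj K A 1 = 0 by simp, zero_tmul]

theorem succ_augProj (n : ℕ) (a : A) :
    Ered K A (n + 1) (augProj K A a) = Ered K A (n + 1) a := by
  simp [Algebra.algebraMap_eq_smul_one, succ_one]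

theorem rid_one_apply (a : A) :
    TensorProduct.rid (PowerSeries K) A (Ered K A 1 a) = augProj K A a := by
  change TensorProduct.rid (PowerSeries K) A
    (TensorProduct.map (augProj K A) Coalgebra.counit (Coalgebra.comul a)) = _
  rw [← LinearMap.rTensor_comp_lTensor, LinearMap.comp_apply, Coalgebra.lTensor_counit_comul,
    LinearMap.rTensor_tmul, TensorProduct.rid_tmul, one_smul]

/-- `Ered (p + 1)` applied to the last `A`-factor of `A^{⊗(n+1)} ⊗ K[[ℏ]]`; the target index is
written `p + n + 1` so that the recursion in `n` typechecks without casts. -/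
def onLast (p : ℕ) : ∀ n : ℕ, Tpow K A (n + 1) →ₗ[PowerSeries K] Tpow K A (p + n + 1)
  | 0 => Ered K A (p + 1) ∘ₗ (TensorProduct.rid (PowerSeries K) A).toLinearMap
  | n + 1 => (onLast p n).lTensor A

theorem eq_onLast_comp (p : ℕ) :
    ∀ n : ℕ, Ered K A (p + n + 1) = onLast K A p n ∘ₗ Ered K A (n + 1)
  | 0 => LinearMap.ext fun a => by
      change _ = Ered K A (p + 1) (TensorProduct.rid (PowerSeries K) A (Ered K A 1 a))
      rw [rid_one_apply, succ_augProj]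
  | n + 1 => LinearMap.ext fun a => by
      change TensorProduct.map (augProj K A) (Ered K A (p + n + 1)) (Coalgebra.comul a) =
        (onLast K A p n).lTensor A (TensorProduct.map (augProj K A) (Ered K A (n + 1))
          (Coalgebra.comul a))
      rw [eq_onLast_comp p n, ← LinearMap.lTensor_comp_map]
      rfl

variable {K A}

theorem eventually_onLast_eq_X_smul
    (hconil : ∀ a : A, ∀ᶠ n in atTop, ∃ z, Ered K A n a = (PowerSeries.X : PowerSeries K) • z) :
    ∀ (n : ℕ) (w : Tpow K A (n + 1)),
      ∀ᶠ p in atTop, ∃ v, onLast K A p n w = (PowerSeries.X : PowerSeries K) • v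
  | 0, w => (tendsto_add_atTop_nat 1).eventually (hconil (TensorProduct.rid (PowerSeries K) A w))
  | n + 1, w => LinearMap.eventually_exists_lTensor_eq_smul (M := Tpow K A (n + 1)) _
      (fun p => onLast K A p n) (eventually_onLast_eq_X_smul hconil n) w

theorem eventually_eq_X_pow_smul
    (hconil : ∀ a : A, ∀ᶠ n in atTop, ∃ z, Ered K A n a = (PowerSeries.X : PowerSeries K) • z)
    (a : A) (k : ℕ) :
    ∀ᶠ n in atTop, ∃ z, Ered K A n a = (PowerSeries.X : PowerSeries K) ^ k • z := by
  induction k with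
  | zero => exact .of_forall fun n => ⟨Ered K A n a, by rw [pow_zero, one_smul]⟩
  | succ k ih =>
    obtain ⟨N, hN⟩ := ih.exists_forall_of_atTop
    obtain ⟨z, hz⟩ := hN (N + 1) N.le_succ
    obtain ⟨M, hM⟩ := eventually_atTop.1 (eventually_onLast_eq_X_smul hconil N z)
    refine eventually_atTop.2 ⟨M + N + 1, fun n hn => ?_⟩
    obtain ⟨p, hp, rfl⟩ : ∃ p, M ≤ p ∧ n = p + N + 1 := ⟨n - N - 1, by omega, by omega⟩
    obtain ⟨v, hv⟩ := hM p hp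
    refine ⟨v, ?_⟩
    rw [eq_onLast_comp, LinearMap.comp_apply, hz, map_smul, hv, smul_smul, ← pow_succ]

end Ered

theorem stmt6
    (hconil0 : ∀ a : A, ∃ N : ℕ, ∀ n ≥ N,
      ∃ z : Tpow K A n, Ered K A n a = (PowerSeries.X : PowerSeries K) • z) :
    ∀ (a : A) (k : ℕ), ∃ N : ℕ, ∀ n ≥ N,
      ∃ z : Tpow K A n, Ered K A n a = (PowerSeries.X : PowerSeries K) ^ k • z :=
  fun a k => eventually_atTop.1 <|
    Ered.eventually_eq_X_pow_smul (fun a => eventually_atTop.2 (hconil0 a)) a k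

end
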